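/- For an ideal I of a commutative ring R, I is countable strongly annihilated in R if and only if the ideal I[x] of polynomials with coefficients in I is countable strongly annihilated in the polynomial ring R[x]. -/

import Mathlib

/-- An ideal `I` is countable strongly annihilated if for each countable subset `S ⊆ I`
and each `b ∉ I` there exists `c` with `c * a = 0` for all `a ∈ S` but `c * b ≠ 0`. -/
def CountableStronglyAnnihilated {R : Type*} [CommRing R] (I : Ideal R) : Prop :=
  ∀ S : Set R, S.Countable → S ⊆ I → ∀ b ∉ I, ∃ c : R, (∀ a ∈ S, c * a = 0) ∧ c * b ≠ 0

/-!
Both directions compare annihilators coefficientwise. If `I` is countable strongly annihilated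
and `S ⊆ I[x]` is countable, the coefficients of the members of `S` form a countable subset of
`I`; a constant `c` killing them all while `c * bₙ ≠ 0` for a coefficient `bₙ ∉ I` of `b` works
in `R[x]`. Conversely, for `S ⊆ I` and `b ∉ I` apply the hypothesis to the constants `C '' S`
and `C b`: a coefficient `cₙ` of the resulting polynomial `c` with `cₙ * b ≠ 0` does the job.
-/

open Polynomial

namespace Polynomial

variable {R : Type*} [CommRing R]

theorem C_mul_eq_zero_iff {c : R} {p : R[X]} : C c * p = 0 ↔ ∀ n, c * p.coeff n = 0 := by
  simp only [Polynomial.ext_iff, coeff_C_mul, coeff_zero]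

theorem mul_C_eq_zero_iff {p : R[X]} {a : R} : p * C a = 0 ↔ ∀ n, p.coeff n * a = 0 := by
  simp only [Polynomial.ext_iff, coeff_mul_C, coeff_zero]

end Polynomial

namespace Ideal

variable {R : Type*} [CommRing R]

theorem C_mem_map_C_iff {I : Ideal R} {a : R} : C a ∈ I.map (C : R →+* R[X]) ↔ a ∈ I :=
  ⟨fun h => by simpa using mem_map_C_iff.mp h 0, mem_map_of_mem _⟩

end Ideal

namespace CountableStronglyAnnihilated

variable {R : Type*} [CommRing R] {I : Ideal R}

theorem map_C (h : CountableStronglyAnnihilated I) :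
    CountableStronglyAnnihilated (I.map (C : R →+* R[X])) := by
  intro S hS hSI b hb
  obtain ⟨n, hbn⟩ : ∃ n, b.coeff n ∉ I := by simpa [Ideal.mem_map_C_iff] using hb
  let coeffsOfS : Set R := ⋃ p ∈ S, Set.range p.coeff
  have hcount : coeffsOfS.Countable := hS.biUnion fun p _ => Set.countable_range _
  have hcoeffsI : coeffsOfS ⊆ I := by
    simp only [coeffsOfS, Set.iUnion_subset_iff, Set.range_subset_iff]
    exact fun p hp => Ideal.mem_map_C_iff.mp (hSI hp)
  obtain ⟨c, hcS, hcb⟩ := h coeffsOfS hcount hcoeffsI _ hbn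
  refine ⟨C c, fun p hp => C_mul_eq_zero_iff.mpr fun m => ?_, fun hzero => ?_⟩
  · exact hcS _ (Set.mem_biUnion hp (Set.mem_range_self m))
  · exact hcb (C_mul_eq_zero_iff.mp hzero n)

theorem of_map_C (h : CountableStronglyAnnihilated (I.map (C : R →+* R[X]))) :
    CountableStronglyAnnihilated I := by
  intro S hS hSI b hb
  have hCS : C '' S ⊆ I.map (C : R →+* R[X]) := by
    rintro _ ⟨a, ha, rfl⟩
    exact Ideal.C_mem_map_C_iff.mpr (hSI ha)
  obtain ⟨c, hcS, hcb⟩ := h _ (hS.image C) hCS _ (mt Ideal.C_mem_map_C_iff.mp hb)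
  obtain ⟨n, hn⟩ : ∃ n, c.coeff n * b ≠ 0 := by
    by_contra! hall
    exact hcb (mul_C_eq_zero_iff.mpr hall)
  exact ⟨c.coeff n, fun a ha => mul_C_eq_zero_iff.mp (hcS _ (Set.mem_image_of_mem C ha)) n, hn⟩

end CountableStronglyAnnihilated

theorem stmt6 {R : Type*} [CommRing R] (I : Ideal R) :
    CountableStronglyAnnihilated I ↔
      CountableStronglyAnnihilated (I.map (Polynomial.C : R →+* Polynomial R)) :=
  ⟨CountableStronglyAnnihilated.map_C, CountableStronglyAnnihilated.of_map_C⟩
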